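/- Let n ≥ 1 and let α, β : Fin n → ℝ be such that the 2n complex numbers e^{2πi α(i)} and e^{2πi β(j)} are pairwise distinct. Let M₀ be the diagonal matrix with entries e^{2πi α(k)}, let N be the matrix with entries N i j = 1 / (e^{2πi β(j)} − e^{2πi α(i)}), let 𝟏 ∈ ℂⁿ be the all-ones vector, and set M₁ := Id + M₀⁻¹ ⬝ (𝟏 ⬝ (𝟏ᵀ ⬝ N⁻¹)). Then det M₁ = e^{2πi ((∑ j, β j) − (∑ i, α i))}. -/

import Mathlib

/-! With `x = e^{2πiα}`, `y = e^{2πiβ}` and `N` the Cauchy matrix, the partial-fraction identity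
`x / (y - x) + 1 = y / (y - x)` reads `M₀ N + 𝟏𝟏ᵀ = N diag y`. Hence
`M₀ M₁ = M₀ + 𝟏𝟏ᵀ N⁻¹ = N diag(y) N⁻¹`, and `det M₀ · det M₁ = ∏ yⱼ`.

`N` is invertible: for `N c = 0`, the barycentric form shows that the Lagrange interpolant at the
nodes `y` with values `cⱼ / wⱼ` (`wⱼ` the nodal weights) vanishes at the `n` points `x`; having
degree `< n`, it is zero, so `c = 0`. -/

open Matrix Complex Polynomial Lagrange Finset

section Cauchy

variable {K ι : Type*} [Field K] [Fintype ι] [DecidableEq ι]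

def cauchyMatrix (x y : ι → K) : Matrix ι ι K := of fun i j => 1 / (y j - x i)

theorem eval_interpolate_div_nodalWeight {x y : ι → K} (hy : Function.Injective y)
    (hxy : ∀ i j, y j ≠ x i) (c : ι → K) (i : ι) :
    eval (x i) (interpolate univ y fun j => c j / nodalWeight univ y j) =
      -(eval (x i) (nodal univ y) * (cauchyMatrix x y *ᵥ c) i) := by
  rw [eval_interpolate_not_at_node _ fun j _ => (hxy i j).symm, ← mul_neg, mulVec, dotProduct,
    ← sum_neg_distrib]
  refine congrArg _ (sum_congr rfl fun j _ => ?_)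
  have hw : nodalWeight univ y j ≠ 0 := nodalWeight_ne_zero hy.injOn (mem_univ j)
  have hne : x i - y j ≠ 0 := sub_ne_zero.mpr (hxy i j).symm
  rw [cauchyMatrix, of_apply, ← neg_sub (x i), div_neg]
  field_simp

theorem det_cauchyMatrix_ne_zero {x y : ι → K} (hx : Function.Injective x)
    (hy : Function.Injective y) (hxy : ∀ i j, y j ≠ x i) : (cauchyMatrix x y).det ≠ 0 := by
  intro hdet
  obtain ⟨c, hc_ne, hc⟩ := exists_mulVec_eq_zero_iff.mpr hdet
  set r : ι → K := fun j => c j / nodalWeight univ y j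
  have hr : interpolate univ y r = 0 :=
    eq_zero_of_degree_lt_of_eval_index_eq_zero univ hx.injOn
      (degree_interpolate_lt r hy.injOn) fun i _ => by
        rw [eval_interpolate_div_nodalWeight hy hxy, hc, Pi.zero_apply, mul_zero, neg_zero]
  refine hc_ne (funext fun j => ?_)
  have hrj : r j = 0 := by
    rw [← eval_interpolate_at_node r hy.injOn (mem_univ j), hr, eval_zero]
  exact (div_eq_zero_iff.mp hrj).resolve_right (nodalWeight_ne_zero hy.injOn (mem_univ j))

theorem diagonal_mul_cauchyMatrix_add_vecMulVec {x y : ι → K} (hxy : ∀ i j, y j ≠ x i) :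
    diagonal x * cauchyMatrix x y + vecMulVec 1 1 = cauchyMatrix x y * diagonal y := by
  ext i j
  have hne : y j - x i ≠ 0 := sub_ne_zero.mpr (hxy i j)
  simp only [cauchyMatrix, Matrix.add_apply, diagonal_mul, mul_diagonal, of_apply,
    vecMulVec_apply, Pi.one_apply, mul_one]
  field_simp
  ring

end Cauchy

theorem det_mul_det_one_add_inv_mul_mul_inv {R n : Type*} [CommRing R] [Fintype n]
    [DecidableEq n] {A B C D : Matrix n n R} (hA : IsUnit A) (hC : IsUnit C)
    (h : A * C + B = C * D) : A.det * (1 + A⁻¹ * B * C⁻¹).det = D.det := by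
  have hconj : A * (1 + A⁻¹ * B * C⁻¹) = C * D * C⁻¹ := by
    rw [← h, Matrix.mul_add, Matrix.mul_one, ← Matrix.mul_assoc, ← Matrix.mul_assoc,
      mul_nonsing_inv _ ((isUnit_iff_isUnit_det A).mp hA), Matrix.one_mul, Matrix.add_mul,
      mul_nonsing_inv_cancel_right _ _ ((isUnit_iff_isUnit_det C).mp hC)]
  rw [← det_mul, hconj, det_conj hC]

theorem det_monodromy_at_one_general (n : ℕ) (α β : Fin n → ℝ)
    (hdist : Function.Injective
      (Sum.elim (fun i => Complex.exp (2 * Real.pi * Complex.I * α i))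
        (fun j => Complex.exp (2 * Real.pi * Complex.I * β j)) : Fin n ⊕ Fin n → ℂ))
    (M₀ : Matrix (Fin n) (Fin n) ℂ)
    (hM₀ : M₀ = Matrix.diagonal fun k => Complex.exp (2 * Real.pi * Complex.I * α k))
    (N : Matrix (Fin n) (Fin n) ℂ)
    (hN : N = Matrix.of fun i j => 1 / (Complex.exp (2 * Real.pi * Complex.I * β j) -
      Complex.exp (2 * Real.pi * Complex.I * α i)))
    (M₁ : Matrix (Fin n) (Fin n) ℂ)
    (hM₁ : M₁ = 1 + M₀⁻¹ *
      Matrix.vecMulVec (fun _ => (1 : ℂ)) (Matrix.vecMul (fun _ => (1 : ℂ)) N⁻¹)) :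
    M₁.det = Complex.exp (2 * Real.pi * Complex.I * ((∑ j, (β j : ℂ)) - ∑ i, (α i : ℂ))) := by
  set x : Fin n → ℂ := fun i => Complex.exp (2 * Real.pi * Complex.I * α i)
  set y : Fin n → ℂ := fun j => Complex.exp (2 * Real.pi * Complex.I * β j)
  obtain ⟨hx, hy, hxy⟩ := Sum.elim_injective.mp hdist
  have hyx : ∀ i j, y j ≠ x i := fun i j => (hxy i j).symm
  have hN' : N = cauchyMatrix x y := hN
  have hM₀_unit : IsUnit M₀ := by
    rw [hM₀, isUnit_diagonal]
    exact Pi.isUnit_iff.mpr fun i => (Complex.exp_ne_zero _).isUnit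
  have hN_unit : IsUnit N := by
    rw [isUnit_iff_isUnit_det, hN']
    exact (det_cauchyMatrix_ne_zero hx hy hyx).isUnit
  have hM₁' : M₁ = 1 + M₀⁻¹ * vecMulVec 1 1 * N⁻¹ := by
    rw [hM₁, Matrix.mul_assoc, vecMulVec_mul]; rfl
  have hdet := det_mul_det_one_add_inv_mul_mul_inv hM₀_unit hN_unit
    (by rw [hM₀, hN']; exact diagonal_mul_cauchyMatrix_add_vecMulVec hyx)
  rw [← hM₁', hM₀, det_diagonal, det_diagonal] at hdet
  calc M₁.det = (∏ j, y j) / ∏ i, x i :=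
        eq_div_of_mul_eq (prod_ne_zero_iff.mpr fun i _ => Complex.exp_ne_zero _)
          (by rw [mul_comm, hdet])
    _ = _ := by rw [mul_sub, Complex.exp_sub, mul_sum, mul_sum, Complex.exp_sum, Complex.exp_sum]

theorem det_monodromy_at_one (n : ℕ) (hn : 1 ≤ n) (α β : Fin n → ℝ)
    (hdist : Function.Injective
      (Sum.elim (fun i => Complex.exp (2 * Real.pi * Complex.I * α i))
        (fun j => Complex.exp (2 * Real.pi * Complex.I * β j)) : Fin n ⊕ Fin n → ℂ))
    (M₀ : Matrix (Fin n) (Fin n) ℂ)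
    (hM₀ : M₀ = Matrix.diagonal fun k => Complex.exp (2 * Real.pi * Complex.I * α k))
    (N : Matrix (Fin n) (Fin n) ℂ)
    (hN : N = Matrix.of fun i j => 1 / (Complex.exp (2 * Real.pi * Complex.I * β j) -
      Complex.exp (2 * Real.pi * Complex.I * α i)))
    (M₁ : Matrix (Fin n) (Fin n) ℂ)
    (hM₁ : M₁ = 1 + M₀⁻¹ *
      Matrix.vecMulVec (fun _ => (1 : ℂ)) (Matrix.vecMul (fun _ => (1 : ℂ)) N⁻¹)) :
    M₁.det = Complex.exp (2 * Real.pi * Complex.I * ((∑ j, (β j : ℂ)) - ∑ i, (α i : ℂ))) :=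
  det_monodromy_at_one_general n α β hdist M₀ hM₀ N hN M₁ hM₁
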